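/- Let H, H', H'' be complex Hilbert spaces and let Z : H → H' and Z' : H' → H'' be continuous linear maps each admitting a parametrix. Then Z, Z' and Z'∘Z all have finite-dimensional kernel and cokernel, and the Fredholm index is additive: ind(Z'∘Z) = ind(Z) + ind(Z'), where ind(Z) = dim ker(Z) − dim(H'/range(Z)). -/

import Mathlib

/-- A continuous linear map is of finite rank if its range is finite dimensional. -/
def FiniteRank {V W : Type*} [NormedAddCommGroup V] [NormedSpace ℂ V]
    [NormedAddCommGroup W] [NormedSpace ℂ W] (T : V →L[ℂ] W) : Prop :=
  FiniteDimensional ℂ (LinearMap.range (T : V →ₗ[ℂ] W))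

/-- `Q` is a parametrix for `Z`: `Q∘Z - id` and `Z∘Q - id` are finite rank. -/
def IsParametrix {H H' : Type*} [NormedAddCommGroup H] [NormedSpace ℂ H]
    [NormedAddCommGroup H'] [NormedSpace ℂ H']
    (Z : H →L[ℂ] H') (Q : H' →L[ℂ] H) : Prop :=
  FiniteRank (Q.comp Z - ContinuousLinearMap.id ℂ H) ∧
    FiniteRank (Z.comp Q - ContinuousLinearMap.id ℂ H')

/-! A parametrix is precisely a continuous quasi-inverse modulo finite-rank maps, so an operator
with a parametrix is Fredholm, and parametrices compose in reverse order. The index is additive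
along the exact sequence
`0 → ker Z → ker Z'Z → ker Z' → coker Z → coker Z'Z → coker Z' → 0`. -/

open LinearMap LinearMap.FiniteRangeSetoid

section Parametrix

variable {V W X : Type*} [NormedAddCommGroup V] [NormedSpace ℂ V]
  [NormedAddCommGroup W] [NormedSpace ℂ W] [NormedAddCommGroup X] [NormedSpace ℂ X]

lemma finiteRank_iff_hasNoetherianRange (T : V →L[ℂ] W) :
    FiniteRank T ↔ (T : V →ₗ[ℂ] W).HasNoetherianRange :=
  IsNoetherian.iff_fg.symm

lemma isParametrix_iff_isQuasiInverse {Z : V →L[ℂ] W} {Q : W →L[ℂ] V} :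
    IsParametrix Z Q ↔ (Q : W →ₗ[ℂ] V).IsQuasiInverse Z := by
  simp only [IsParametrix, finiteRank_iff_hasNoetherianRange, IsQuasiInverse,
    IsLeftQuasiInverse, IsRightQuasiInverse, equiv_iff_hasNoetherianRange]
  rfl

lemma IsParametrix.comp {Z : V →L[ℂ] W} {Q : W →L[ℂ] V} {Z' : W →L[ℂ] X} {Q' : X →L[ℂ] W}
    (hQ : IsParametrix Z Q) (hQ' : IsParametrix Z' Q') :
    IsParametrix (Z'.comp Z) (Q.comp Q') :=
  isParametrix_iff_isQuasiInverse.mpr <|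
    (isParametrix_iff_isQuasiInverse.mp hQ).comp (isParametrix_iff_isQuasiInverse.mp hQ')

lemma IsParametrix.isFredholm {Z : V →L[ℂ] W} {Q : W →L[ℂ] V} (hQ : IsParametrix Z Q) :
    Z.IsFredholm :=
  .of_isQuasiInverse (isParametrix_iff_isQuasiInverse.mp hQ)

end Parametrix

lemma ContinuousLinearMap.IsFredholm.index_comp {𝕜 E F G : Type*} [NontriviallyNormedField 𝕜]
    [AddCommGroup E] [Module 𝕜 E] [TopologicalSpace E]
    [AddCommGroup F] [Module 𝕜 F] [TopologicalSpace F]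
    [AddCommGroup G] [Module 𝕜 G] [TopologicalSpace G]
    {u : E →L[𝕜] F} {v : F →L[𝕜] G} (hu : u.IsFredholm) (hv : v.IsFredholm) :
    (v.comp u : E →ₗ[𝕜] G).index = (u : E →ₗ[𝕜] F).index + (v : F →ₗ[𝕜] G).index := by
  have := hu.finite_ker
  have := hu.finite_coker
  have := hv.finite_ker
  have := hv.finite_coker
  rw [add_comm]
  exact LinearMap.index_comp (v : F →ₗ[𝕜] G)

theorem stmt4_general {H H' H'' : Type*}
    [NormedAddCommGroup H] [InnerProductSpace ℂ H]
    [NormedAddCommGroup H'] [InnerProductSpace ℂ H']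
    [NormedAddCommGroup H''] [InnerProductSpace ℂ H'']
    (Z : H →L[ℂ] H') (Z' : H' →L[ℂ] H'')
    (hZ : ∃ Q : H' →L[ℂ] H, IsParametrix Z Q)
    (hZ' : ∃ Q' : H'' →L[ℂ] H', IsParametrix Z' Q') :
    FiniteDimensional ℂ (LinearMap.ker (Z : H →ₗ[ℂ] H')) ∧
    FiniteDimensional ℂ (H' ⧸ LinearMap.range (Z : H →ₗ[ℂ] H')) ∧
    FiniteDimensional ℂ (LinearMap.ker (Z' : H' →ₗ[ℂ] H'')) ∧
    FiniteDimensional ℂ (H'' ⧸ LinearMap.range (Z' : H' →ₗ[ℂ] H'')) ∧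
    FiniteDimensional ℂ (LinearMap.ker (Z'.comp Z : H →ₗ[ℂ] H'')) ∧
    FiniteDimensional ℂ (H'' ⧸ LinearMap.range (Z'.comp Z : H →ₗ[ℂ] H'')) ∧
    (Module.finrank ℂ (LinearMap.ker (Z'.comp Z : H →ₗ[ℂ] H'')) : ℤ) -
        (Module.finrank ℂ (H'' ⧸ LinearMap.range (Z'.comp Z : H →ₗ[ℂ] H'')) : ℤ) =
      ((Module.finrank ℂ (LinearMap.ker (Z : H →ₗ[ℂ] H')) : ℤ) -
          (Module.finrank ℂ (H' ⧸ LinearMap.range (Z : H →ₗ[ℂ] H')) : ℤ)) +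
        ((Module.finrank ℂ (LinearMap.ker (Z' : H' →ₗ[ℂ] H'')) : ℤ) -
          (Module.finrank ℂ (H'' ⧸ LinearMap.range (Z' : H' →ₗ[ℂ] H'')) : ℤ)) := by
  obtain ⟨Q, hQ⟩ := hZ
  obtain ⟨Q', hQ'⟩ := hZ'
  have hZF := hQ.isFredholm
  have hZ'F := hQ'.isFredholm
  have hZ'ZF := (hQ.comp hQ').isFredholm
  exact ⟨hZF.finite_ker, hZF.finite_coker, hZ'F.finite_ker, hZ'F.finite_coker,
    hZ'ZF.finite_ker, hZ'ZF.finite_coker, hZF.index_comp hZ'F⟩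

theorem stmt4 {H H' H'' : Type*}
    [NormedAddCommGroup H] [InnerProductSpace ℂ H] [CompleteSpace H]
    [NormedAddCommGroup H'] [InnerProductSpace ℂ H'] [CompleteSpace H']
    [NormedAddCommGroup H''] [InnerProductSpace ℂ H''] [CompleteSpace H'']
    (Z : H →L[ℂ] H') (Z' : H' →L[ℂ] H'')
    (hZ : ∃ Q : H' →L[ℂ] H, IsParametrix Z Q)
    (hZ' : ∃ Q' : H'' →L[ℂ] H', IsParametrix Z' Q') :
    FiniteDimensional ℂ (LinearMap.ker (Z : H →ₗ[ℂ] H')) ∧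
    FiniteDimensional ℂ (H' ⧸ LinearMap.range (Z : H →ₗ[ℂ] H')) ∧
    FiniteDimensional ℂ (LinearMap.ker (Z' : H' →ₗ[ℂ] H'')) ∧
    FiniteDimensional ℂ (H'' ⧸ LinearMap.range (Z' : H' →ₗ[ℂ] H'')) ∧
    FiniteDimensional ℂ (LinearMap.ker (Z'.comp Z : H →ₗ[ℂ] H'')) ∧
    FiniteDimensional ℂ (H'' ⧸ LinearMap.range (Z'.comp Z : H →ₗ[ℂ] H'')) ∧
    (Module.finrank ℂ (LinearMap.ker (Z'.comp Z : H →ₗ[ℂ] H'')) : ℤ) -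
        (Module.finrank ℂ (H'' ⧸ LinearMap.range (Z'.comp Z : H →ₗ[ℂ] H'')) : ℤ) =
      ((Module.finrank ℂ (LinearMap.ker (Z : H →ₗ[ℂ] H')) : ℤ) -
          (Module.finrank ℂ (H' ⧸ LinearMap.range (Z : H →ₗ[ℂ] H')) : ℤ)) +
        ((Module.finrank ℂ (LinearMap.ker (Z' : H' →ₗ[ℂ] H'')) : ℤ) -
          (Module.finrank ℂ (H'' ⧸ LinearMap.range (Z' : H' →ₗ[ℂ] H'')) : ℤ)) :=
  stmt4_general Z Z' hZ hZ'
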